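/- For every dimension d ≥ 1 and order m with d < m, and every exponent ρ with d/m < ρ < 1, the quantity sup over β ∈ ℝ and ω ∈ ℝ^d of the integral over ξ ∈ ℝ^d of |−β + |ξ−ω|^m + i|^{−ρ} dξ is finite. -/

import Mathlib

open MeasureTheory Set Metric
open scoped ENNReal NNReal

lemma aux_sub_rpow {a b p : ℝ} (ha : 0 ≤ a) (hab : a ≤ b) (hp0 : 0 ≤ p) (hp1 : p ≤ 1) :
    b ^ p - a ^ p ≤ (b - a) ^ p := by
  have key := NNReal.rpow_add_le_add_rpow a.toNNReal (b - a).toNNReal hp0 hp1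
  have h1 : (a.toNNReal + (b - a).toNNReal : ℝ≥0) = b.toNNReal := by
    ext
    simp [Real.coe_toNNReal _ ha, Real.coe_toNNReal _ (sub_nonneg.2 hab),
      Real.coe_toNNReal _ (ha.trans hab)]
  rw [h1] at key
  have h2 := (NNReal.coe_le_coe).2 key
  simp only [NNReal.coe_rpow, NNReal.coe_add, Real.coe_toNNReal _ ha,
    Real.coe_toNNReal _ (sub_nonneg.2 hab), Real.coe_toNNReal _ (ha.trans hab)] at h2
  linarith

/-- For every dimension `d ≥ 1` and order `m` with `d < m`, and every exponent `ρ` with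
`d/m < ρ < 1`, the supremum over `β ∈ ℝ` and `ω ∈ ℝ^d` of
`∫_{ℝ^d} ((|ξ-ω|^m - β)^2 + 1)^{-ρ/2} dξ` is finite. -/
theorem stmt0 (d : ℕ) (hd : 1 ≤ d) (m : ℝ) (hm : (d : ℝ) < m) (ρ : ℝ)
    (hρ1 : (d : ℝ) / m < ρ) (hρ2 : ρ < 1) :
    ∃ M : ℝ≥0∞, M ≠ ⊤ ∧ ∀ (β : ℝ) (ω : EuclideanSpace ℝ (Fin d)),
      ∫⁻ ξ : EuclideanSpace ℝ (Fin d),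
        ENNReal.ofReal (((‖ξ - ω‖ ^ m - β) ^ 2 + 1) ^ (-(ρ / 2))) ≤ M := by
  have hd0 : (0:ℝ) < d := by exact_mod_cast hd
  have hm0 : (0:ℝ) < m := hd0.trans hm
  set α : ℝ := (d:ℝ) / m with hα
  have hα0 : 0 < α := div_pos hd0 hm0
  have hα1 : α < 1 := (div_lt_one hm0).2 hm
  have hρ0 : 0 < ρ := hα0.trans hρ1
  set p : ℝ := α / ρ with hpdef
  have hp0 : 0 < p := div_pos hα0 hρ0
  have hp1 : p < 1 := by rw [hpdef, div_lt_one hρ0]; exact hρ1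
  haveI : Nontrivial (EuclideanSpace ℝ (Fin d)) := by
    haveI : NeZero d := ⟨by omega⟩
    infer_instance
  set v : ℝ≥0∞ := volume (ball (0 : EuclideanSpace ℝ (Fin d)) 1) with hv
  have hv_top : v ≠ ⊤ := measure_ball_lt_top.ne
  refine ⟨(∫⁻ t in Ioo (0:ℝ) 1, ENNReal.ofReal (2 ^ α * t ^ (-p))) * v, ?_, ?_⟩
  · refine ENNReal.mul_ne_top ?_ hv_top
    have h1 : IntervalIntegrable (fun t : ℝ => t ^ (-p)) volume 0 1 :=
      intervalIntegral.intervalIntegrable_rpow' (by linarith)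
    have hint : IntegrableOn (fun t : ℝ => 2 ^ α * t ^ (-p)) (Ioo 0 1) :=
      ((h1.const_mul (2 ^ α)).1.mono_set Ioo_subset_Ioc_self)
    exact hint.setLIntegral_lt_top.ne
  · intro β ω
    set f : EuclideanSpace ℝ (Fin d) → ℝ :=
      fun ξ => ((‖ξ - ω‖ ^ m - β) ^ 2 + 1) ^ (-(ρ / 2)) with hf
    have f_nn : ∀ ξ, 0 ≤ f ξ := fun ξ => Real.rpow_nonneg (by positivity) _
    have f_c : Continuous f := by
      have h1 : Continuous fun ξ : EuclideanSpace ℝ (Fin d) => ‖ξ - ω‖ ^ m :=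
        ((continuous_id.sub continuous_const).norm).rpow_const (fun x => Or.inr hm0.le)
      have h2 : Continuous fun ξ : EuclideanSpace ℝ (Fin d) => (‖ξ - ω‖ ^ m - β) ^ 2 + 1 :=
        ((h1.sub continuous_const).pow 2).add continuous_const
      exact h2.rpow_const (fun ξ => Or.inl (by positivity))
    have f_m : Measurable f := f_c.measurable
    rw [lintegral_eq_lintegral_meas_lt volume (Filter.Eventually.of_forall f_nn)
      f_m.aemeasurable]
    have key : ∀ t ∈ Ioi (0:ℝ), volume {a | t < f a} ≤
        (Ioo (0:ℝ) 1).indicator (fun t => ENNReal.ofReal (2 ^ α * t ^ (-p)) * v) t := by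
      intro t ht
      simp only [mem_Ioi] at ht
      rcases le_or_gt 1 t with ht1 | ht1
      · have hempty : {a | t < f a} = (∅ : Set (EuclideanSpace ℝ (Fin d))) := by
          apply eq_empty_iff_forall_notMem.2
          intro ξ hξ
          simp only [mem_setOf_eq] at hξ
          have hle : f ξ ≤ 1 :=
            Real.rpow_le_one_of_one_le_of_nonpos (by nlinarith [sq_nonneg (‖ξ - ω‖ ^ m - β)])
              (by linarith)
          linarith
        rw [hempty]
        simp
      · rw [indicator_of_mem (mem_Ioo.2 ⟨ht, ht1⟩)]
        set s : ℝ := Real.sqrt (t ^ (-(2/ρ)) - 1) with hs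
        have hs0 : 0 ≤ s := Real.sqrt_nonneg _
        have htpow : 1 < t ^ (-(2/ρ)) := by
          rw [Real.one_lt_rpow_iff_of_pos ht]
          right
          constructor
          · exact ht1
          · rw [neg_lt, neg_zero]; positivity
        have hs2 : s ^ 2 = t ^ (-(2/ρ)) - 1 := Real.sq_sqrt (by linarith)
        have hsub : {a | t < f a} ⊆ {ξ | |‖ξ - ω‖ ^ m - β| < s} := by
          intro ξ hξ
          simp only [mem_setOf_eq] at hξ ⊢
          set q : ℝ := ‖ξ - ω‖ ^ m - β with hq
          have hbase : (0:ℝ) < q ^ 2 + 1 := by positivity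
          have h2 : q ^ 2 + 1 < t ^ (-(2/ρ)) := by
            have h3 := Real.rpow_lt_rpow_of_neg ht hξ
              (show -(2/ρ) < 0 by rw [neg_lt, neg_zero]; positivity)
            have h3' : ((q ^ 2 + 1) ^ (-(ρ / 2))) ^ (-(2/ρ)) < t ^ (-(2/ρ)) := h3
            rwa [← Real.rpow_mul hbase.le,
              show -(ρ / 2) * -(2/ρ) = 1 by field_simp,
              Real.rpow_one] at h3'
          have hq2 : q ^ 2 < s ^ 2 := by rw [hs2]; linarith
          exact abs_lt_of_sq_lt_sq hq2 hs0
        by_cases hβs : β + s ≤ 0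
        · have hS : {ξ : EuclideanSpace ℝ (Fin d) | |‖ξ - ω‖ ^ m - β| < s} = ∅ := by
            apply eq_empty_iff_forall_notMem.2
            intro ξ hξ
            simp only [mem_setOf_eq] at hξ
            have h1 := (abs_lt.1 hξ).2
            have h2 : (0:ℝ) ≤ ‖ξ - ω‖ ^ m := Real.rpow_nonneg (norm_nonneg _) m
            linarith
          calc volume {a | t < f a} ≤ volume {ξ : EuclideanSpace ℝ (Fin d) |
                |‖ξ - ω‖ ^ m - β| < s} := measure_mono hsub
            _ = 0 := by rw [hS]; exact measure_empty
            _ ≤ _ := zero_le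
        · push_neg at hβs
          set a : ℝ := max (β - s) 0 with ha
          have ha0 : 0 ≤ a := le_max_right _ _
          have hab : a ≤ β + s := max_le (by linarith) hβs.le
          set r1 : ℝ := a ^ (1/m) with hr1def
          set r2 : ℝ := (β + s) ^ (1/m) with hr2def
          have hr1 : 0 ≤ r1 := Real.rpow_nonneg ha0 _
          have hr2 : 0 ≤ r2 := Real.rpow_nonneg hβs.le _
          have hkey1 : {ξ : EuclideanSpace ℝ (Fin d) | |‖ξ - ω‖ ^ m - β| < s} ⊆
              ball ω r2 \ ball ω r1 := by
            intro ξ hξ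
            simp only [mem_setOf_eq] at hξ
            have hx0 : (0:ℝ) ≤ ‖ξ - ω‖ := norm_nonneg _
            have hxm0 : (0:ℝ) ≤ ‖ξ - ω‖ ^ m := Real.rpow_nonneg hx0 m
            constructor
            · have hxm : ‖ξ - ω‖ ^ m < β + s := by
                have := (abs_lt.1 hξ).2; linarith
              have h4 : (‖ξ - ω‖ ^ m) ^ (1/m) < r2 :=
                Real.rpow_lt_rpow hxm0 hxm (by positivity)
              rw [← Real.rpow_mul hx0, mul_one_div, div_self hm0.ne', Real.rpow_one] at h4
              rw [mem_ball, dist_eq_norm]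
              exact h4
            · intro hmem
              rw [mem_ball, dist_eq_norm] at hmem
              have h5 : ‖ξ - ω‖ ^ m < r1 ^ m := Real.rpow_lt_rpow hx0 hmem hm0
              rw [hr1def, ← Real.rpow_mul ha0, one_div_mul_cancel hm0.ne',
                Real.rpow_one] at h5
              have h6 := (abs_lt.1 hξ).1
              rcases le_total (β - s) 0 with h7 | h7
              · rw [ha, max_eq_right h7] at h5; linarith
              · rw [ha, max_eq_left h7] at h5; linarith
          have hball : ball ω r1 ⊆ ball ω r2 :=
            ball_subset_ball (Real.rpow_le_rpow ha0 hab (by positivity))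
          have hmain : r2 ^ d - r1 ^ d ≤ 2 ^ α * t ^ (-p) := by
            have e2 : (r2:ℝ) ^ d = (β + s) ^ α := by
              rw [← Real.rpow_natCast r2 d, hr2def, ← Real.rpow_mul hβs.le]
              congr 1
              rw [hα]; ring
            have e1 : (r1:ℝ) ^ d = a ^ α := by
              rw [← Real.rpow_natCast r1 d, hr1def, ← Real.rpow_mul ha0]
              congr 1
              rw [hα]; ring
            have h8 : (β + s) ^ α - a ^ α ≤ (β + s - a) ^ α :=
              aux_sub_rpow ha0 hab hα0.le hα1.le
            have h9 : (β + s - a) ^ α ≤ (2 * s) ^ α := by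
              apply Real.rpow_le_rpow (by linarith) _ hα0.le
              have : β - s ≤ a := le_max_left _ _
              linarith
            have h10 : (2 * s) ^ α = 2 ^ α * s ^ α :=
              Real.mul_rpow (by norm_num) hs0
            have hsle : s ≤ t ^ (-(1/ρ)) := by
              have h11 : s ≤ Real.sqrt (t ^ (-(2/ρ))) :=
                Real.sqrt_le_sqrt (by linarith)
              rwa [Real.sqrt_eq_rpow, ← Real.rpow_mul ht.le,
                show -(2/ρ) * (1/2) = -(1/ρ) by ring] at h11
            have h12 : s ^ α ≤ t ^ (-p) := by
              calc s ^ α ≤ (t ^ (-(1/ρ))) ^ α := Real.rpow_le_rpow hs0 hsle hα0.le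
                _ = t ^ (-p) := by
                    rw [← Real.rpow_mul ht.le]
                    congr 1
                    rw [hpdef]; ring
            calc r2 ^ d - r1 ^ d = (β + s) ^ α - a ^ α := by rw [e2, e1]
              _ ≤ (2 * s) ^ α := h8.trans h9
              _ = 2 ^ α * s ^ α := h10
              _ ≤ 2 ^ α * t ^ (-p) := by
                  apply mul_le_mul_of_nonneg_left h12 (Real.rpow_nonneg (by norm_num) _)
          calc volume {a | t < f a}
              ≤ volume {ξ : EuclideanSpace ℝ (Fin d) | |‖ξ - ω‖ ^ m - β| < s} :=
                measure_mono hsub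
            _ ≤ volume (ball ω r2 \ ball ω r1) := measure_mono hkey1
            _ = volume (ball ω r2) - volume (ball ω r1) :=
                measure_diff hball measurableSet_ball.nullMeasurableSet
                  measure_ball_lt_top.ne
            _ = ENNReal.ofReal (r2 ^ d) * v - ENNReal.ofReal (r1 ^ d) * v := by
                rw [Measure.addHaar_ball volume ω hr2, Measure.addHaar_ball volume ω hr1,
                  finrank_euclideanSpace_fin]
            _ = ENNReal.ofReal (r2 ^ d - r1 ^ d) * v := by
                rw [← ENNReal.sub_mul (fun _ _ => hv_top),
                  ENNReal.ofReal_sub _ (pow_nonneg hr1 d)]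
            _ ≤ ENNReal.ofReal (2 ^ α * t ^ (-p)) * v := by
                exact mul_le_mul_left (ENNReal.ofReal_le_ofReal hmain) v
    calc ∫⁻ t in Ioi (0:ℝ), volume {a | t < f a}
        ≤ ∫⁻ t in Ioi (0:ℝ), (Ioo (0:ℝ) 1).indicator
            (fun t => ENNReal.ofReal (2 ^ α * t ^ (-p)) * v) t := by
          exact setLIntegral_mono' measurableSet_Ioi key
      _ = ∫⁻ t in Ioo (0:ℝ) 1, ENNReal.ofReal (2 ^ α * t ^ (-p)) * v := by
          rw [lintegral_indicator measurableSet_Ioo,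
            Measure.restrict_restrict measurableSet_Ioo]
          congr 1
          rw [Ioo_inter_Ioi]
          simp
      _ = (∫⁻ t in Ioo (0:ℝ) 1, ENNReal.ofReal (2 ^ α * t ^ (-p))) * v := by
          exact lintegral_mul_const' v _ hv_top
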